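/- Let Δ ⊂ ℝ^d be a d-dimensional lattice polytope with Δ^{FI} = {0} and let Θ be a k-dimensional face of Δ such that [Θ*] is nonempty, where Θ* := {y ∈ Δ* : ⟨x,y⟩ = −1 for all x ∈ Θ}. Then [Θ*] is a face of the lattice polytope [Δ*] of dimension at most d−1−k. -/

import Mathlib

open Finset Pointwise MeasureTheory
noncomputable section

variable {d : ℕ}

/-- Standard pairing on ℝ^d. -/
def pairR (x y : Fin d → ℝ) : ℝ := ∑ i, x i * y i

/-- Embedding of ℤ^d into ℝ^d. -/
def toR (n : Fin d → ℤ) : Fin d → ℝ := fun i => (n i : ℝ)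

/-- A point of ℝ^d with integer coordinates. -/
def IsLatticePoint (x : Fin d → ℝ) : Prop := ∀ i, ∃ z : ℤ, x i = (z : ℝ)

/-- ord_Δ(y) = min_{x ∈ Δ} ⟨x, y⟩. -/
def ordP (Δ : Set (Fin d → ℝ)) (y : Fin d → ℝ) : ℝ := sInf ((fun x => pairR x y) '' Δ)

/-- The Fine interior of Δ. -/
def fineInterior (Δ : Set (Fin d → ℝ)) : Set (Fin d → ℝ) :=
  {x | ∀ n : Fin d → ℤ, n ≠ 0 → ordP Δ (toR n) + 1 ≤ pairR x (toR n)}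

/-- A lattice polytope: the convex hull of finitely many lattice points. -/
def IsLatticePolytope (Δ : Set (Fin d → ℝ)) : Prop :=
  ∃ S : Finset (Fin d → ℤ), Δ = convexHull ℝ (toR '' (S : Set (Fin d → ℤ)))

/-- The polar set Δ* = {y : ⟨x,y⟩ ≥ -1 for all x ∈ Δ}. -/
def polarSet (Δ : Set (Fin d → ℝ)) : Set (Fin d → ℝ) :=
  {y | ∀ x ∈ Δ, -1 ≤ pairR x y}

/-- [P] = convex hull of the lattice points of P. -/
def latticeHull (P : Set (Fin d → ℝ)) : Set (Fin d → ℝ) :=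
  convexHull ℝ {x ∈ P | IsLatticePoint x}

/-- Pseudoreflexive polytope: Fine interior {0} and Δ = [[Δ*]*]. -/
def IsPseudoreflexive (Δ : Set (Fin d → ℝ)) : Prop :=
  IsLatticePolytope Δ ∧ fineInterior Δ = {0} ∧
    Δ = latticeHull (polarSet (latticeHull (polarSet Δ)))

/-- (Exposed) face of Δ cut out by a supporting linear functional. -/
def IsFaceOf (Δ F : Set (Fin d → ℝ)) : Prop :=
  ∃ y : Fin d → ℝ, F = {x ∈ Δ | pairR x y = ordP Δ y}

/-- Dimension of a subset of ℝ^d. -/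
def dimSet (S : Set (Fin d → ℝ)) : ℕ := Module.finrank ℝ ↥(vectorSpan ℝ S)

/-- The face of the polar polytope dual to a face F of Δ. -/
def dualFace (Δ F : Set (Fin d → ℝ)) : Set (Fin d → ℝ) :=
  {y ∈ polarSet Δ | ∀ x ∈ F, pairR x y = -1}

/-- The cone ℝ_{≥0}·Θ over a set Θ. -/
def coneOver (Θ : Set (Fin d → ℝ)) : Set (Fin d → ℝ) :=
  {x | ∃ c : ℝ, 0 ≤ c ∧ ∃ p ∈ Θ, x = c • p}

/-- A face Θ is ordinary if every lattice point of ℝ_{≥0}Θ lies in some dilate lΘ. -/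
def IsOrdinaryFace (Θ : Set (Fin d → ℝ)) : Prop :=
  ∀ n : Fin d → ℤ, toR n ∈ coneOver Θ → ∃ l : ℕ, toR n ∈ (l : ℝ) • Θ

/-- Facet: a face of dimension d-1. -/
def IsFacet (Δ Θ : Set (Fin d → ℝ)) : Prop :=
  IsFaceOf Δ Θ ∧ dimSet Θ + 1 = d

/-!
Let `v` be the barycentre of the vertices of `Θ`. Every linear functional that is bounded below
on `Θ` by its value at `v` is constant on `Θ`, so a lattice point of `Δ*` lies in `Θ*` as soon as
it pairs to `-1` with `v`. Since `⟨v, ·⟩ ≥ -1` on `[Δ*]`, this exhibits `[Θ*]` as the face of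
`[Δ*]` cut out by `v`. For the dimension, `[Θ*]` lies in the hyperplanes `⟨x, ·⟩ = -1`, `x ∈ Θ`,
so its direction is orthogonal to the linear span of `Θ`, which has dimension `k + 1` because the
affine span of `Θ` misses the origin.
-/

section Convexity

variable {𝕜 E : Type*} [Field 𝕜] [AddCommGroup E] [Module 𝕜 E]

theorem vectorSpan_le_ker_of_forall_eq {s : Set E} {f : E →ₗ[𝕜] 𝕜} {c : 𝕜}
    (hs : ∀ x ∈ s, f x = c) : vectorSpan 𝕜 s ≤ LinearMap.ker f := by
  rw [vectorSpan_def, Submodule.span_le]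
  rintro _ ⟨a, ha, b, hb, rfl⟩
  simp [hs a ha, hs b hb]

theorem vectorSpan_le_span (s : Set E) : vectorSpan 𝕜 s ≤ Submodule.span 𝕜 s := by
  rw [vectorSpan_def, Submodule.span_le]
  rintro _ ⟨a, ha, b, hb, rfl⟩
  exact sub_mem (Submodule.subset_span ha) (Submodule.subset_span hb)

theorem finrank_vectorSpan_lt_finrank_span [FiniteDimensional 𝕜 E] {s : Set E}
    {f : E →ₗ[𝕜] 𝕜} {c : 𝕜} (hc : c ≠ 0) (hs : ∀ x ∈ s, f x = c) (hne : s.Nonempty) :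
    Module.finrank 𝕜 (vectorSpan 𝕜 s) < Module.finrank 𝕜 (Submodule.span 𝕜 s) := by
  obtain ⟨x, hx⟩ := hne
  refine Submodule.finrank_lt_finrank_of_lt <|
    (SetLike.lt_iff_le_and_exists).2 ⟨vectorSpan_le_span s, x, Submodule.subset_span hx, ?_⟩
  intro hxs
  exact hc ((hs x hx).symm.trans (vectorSpan_le_ker_of_forall_eq hs hxs))

variable [LinearOrder 𝕜] [IsStrictOrderedRing 𝕜]

theorem eq_of_centerMass_eq_of_le {ι : Type*} {t : Finset ι} {w : ι → 𝕜} {z : ι → E}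
    {f : E →ₗ[𝕜] 𝕜} {m : 𝕜} (hw₀ : ∀ i ∈ t, 0 ≤ w i) (hw : 0 < ∑ i ∈ t, w i)
    (hz : ∀ i ∈ t, m ≤ f (z i)) (hm : f (t.centerMass w z) = m) {i : ι} (hi : i ∈ t)
    (hwi : w i ≠ 0) : f (z i) = m := by
  have hsum : ∑ j ∈ t, w j * (f (z j) - m) = 0 := by
    rw [Finset.centerMass, map_smul, map_sum] at hm
    simp only [map_smul, smul_eq_mul] at hm
    simp only [mul_sub, Finset.sum_sub_distrib, ← Finset.sum_mul]
    field_simp at hm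
    linarith
  have := (Finset.sum_eq_zero_iff_of_nonneg fun j hj =>
    mul_nonneg (hw₀ j hj) (sub_nonneg.2 (hz j hj))).1 hsum i hi
  linarith [(mul_eq_zero.1 this).resolve_left hwi]

theorem convexHull_sep_eq_of_le {s : Set E} {f : E →ₗ[𝕜] 𝕜} {m : 𝕜} (hs : ∀ p ∈ s, m ≤ f p) :
    convexHull 𝕜 {p ∈ s | f p = m} = {x ∈ convexHull 𝕜 s | f x = m} := by
  apply Set.Subset.antisymm
  · exact convexHull_min (fun p hp => ⟨subset_convexHull 𝕜 s hp.1, hp.2⟩)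
      ((convex_convexHull 𝕜 s).inter (convex_hyperplane f.isLinear m))
  rintro x ⟨hx, hfx⟩
  rw [_root_.convexHull_eq] at hx
  obtain ⟨ι, t, w, z, hw₀, hw₁, hz, rfl⟩ := hx
  rw [← Finset.centerMass_filter_ne_zero]
  refine Finset.centerMass_mem_convexHull _ (fun i hi => hw₀ i (Finset.mem_filter.1 hi).1)
    (by rw [Finset.sum_filter_ne_zero, hw₁]; exact one_pos) fun i hi => ?_
  obtain ⟨hit, hwi⟩ := Finset.mem_filter.1 hi
  exact ⟨hz i hit, eq_of_centerMass_eq_of_le hw₀ (hw₁ ▸ one_pos) (fun j hj => hs _ (hz j hj))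
    hfx hit hwi⟩

theorem eqOn_convexHull_of_centerMass_eq {t : Finset E} {f : E →ₗ[𝕜] 𝕜} {m : 𝕜}
    (ht : ∀ p ∈ t, m ≤ f p) (hm : f (t.centerMass (fun _ => (1 : 𝕜)) id) = m) :
    ∀ x ∈ convexHull 𝕜 (t : Set E), f x = m := by
  rcases t.eq_empty_or_nonempty with rfl | hne
  · simp
  have hpos : (0 : 𝕜) < ∑ _p ∈ t, (1 : 𝕜) := by simpa using hne
  refine fun x hx => convexHull_min (fun p hp => ?_) (convex_hyperplane f.isLinear m) hx
  exact eq_of_centerMass_eq_of_le (fun _ _ => zero_le_one) hpos ht hm hp one_ne_zero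

end Convexity

theorem finrank_add_finrank_le_of_dotProduct_eq_zero {K n : Type*} [Field K] [Fintype n]
    [DecidableEq n] {U W : Submodule K (n → K)} (h : ∀ u ∈ U, ∀ w ∈ W, w ⬝ᵥ u = 0) :
    Module.finrank K U + Module.finrank K W ≤ Fintype.card n := by
  have hW : W.map (dotProductEquiv K n : (n → K) →ₗ[K] Module.Dual K (n → K)) ≤
      U.dualAnnihilator := by
    rintro _ ⟨w, hw, rfl⟩
    exact (Submodule.mem_dualAnnihilator _).2 fun u hu => h u hu w hw
  have := Submodule.finrank_mono hW
  rw [LinearEquiv.finrank_map_eq] at this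
  have := Subspace.finrank_add_finrank_dualAnnihilator_eq U
  rw [Module.finrank_fintype_fun_eq_card] at this
  omega

def pairRₗ (y : Fin d → ℝ) : (Fin d → ℝ) →ₗ[ℝ] ℝ := (dotProductBilin ℝ ℝ).flip y

theorem continuous_pairR (y : Fin d → ℝ) : Continuous fun x => pairR x y :=
  (pairRₗ y).continuous_of_finiteDimensional

theorem pairR_comm (x y : Fin d → ℝ) : pairR x y = pairR y x := dotProduct_comm x y

theorem ordP_eq_of_forall_le {P : Set (Fin d → ℝ)} {x y : Fin d → ℝ} (hx : x ∈ P)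
    (h : ∀ z ∈ P, pairR x y ≤ pairR z y) : ordP P y = pairR x y :=
  IsLeast.csInf_eq ⟨⟨x, hx, rfl⟩, by rintro _ ⟨z, hz, rfl⟩; exact h z hz⟩

theorem IsFaceOf.subset {Δ Θ : Set (Fin d → ℝ)} (hΘ : IsFaceOf Δ Θ) : Θ ⊆ Δ := by
  obtain ⟨y, rfl⟩ := hΘ
  exact Set.sep_subset _ _

theorem IsFaceOf.nonempty {Δ Θ : Set (Fin d → ℝ)} (hΘ : IsFaceOf Δ Θ) (hΔ : IsCompact Δ)
    (hne : Δ.Nonempty) : Θ.Nonempty := by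
  obtain ⟨y, rfl⟩ := hΘ
  obtain ⟨x, hx, hmin⟩ := hΔ.exists_isMinOn hne (continuous_pairR y).continuousOn
  exact ⟨x, hx, (ordP_eq_of_forall_le hx fun z hz => hmin hz).symm⟩

theorem IsFaceOf.eq_convexHull_inter {s Θ : Set (Fin d → ℝ)} (hs : s.Finite)
    (hΘ : IsFaceOf (convexHull ℝ s) Θ) : Θ = convexHull ℝ (s ∩ Θ) := by
  obtain ⟨y, rfl⟩ := hΘ
  have hbdd : BddBelow ((fun x => pairR x y) '' convexHull ℝ s) :=
    (hs.isCompact_convexHull (𝕜 := ℝ)).bddBelow_image (continuous_pairR y).continuousOn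
  have hle : ∀ p ∈ s, ordP (convexHull ℝ s) y ≤ pairRₗ y p := fun p hp =>
    csInf_le hbdd ⟨p, subset_convexHull ℝ s hp, rfl⟩
  have hsep : s ∩ {x ∈ convexHull ℝ s | pairR x y = ordP (convexHull ℝ s) y} =
      {p ∈ s | pairRₗ y p = ordP (convexHull ℝ s) y} := by
    ext p
    exact ⟨fun hp => ⟨hp.1, hp.2.2⟩, fun hp => ⟨hp.1, subset_convexHull ℝ s hp.1, hp.2⟩⟩
  rw [hsep, convexHull_sep_eq_of_le hle]
  rfl

theorem IsFaceOf.exists_mem_forall_eq {s Θ : Set (Fin d → ℝ)} (hs : s.Finite)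
    (hne : s.Nonempty) (hΘ : IsFaceOf (convexHull ℝ s) Θ) :
    ∃ v ∈ Θ, ∀ (f : (Fin d → ℝ) →ₗ[ℝ] ℝ) (m : ℝ),
      (∀ x ∈ Θ, m ≤ f x) → f v = m → ∀ x ∈ Θ, f x = m := by
  have hΘeq := hΘ.eq_convexHull_inter hs
  set T := (hs.subset Set.inter_subset_left).toFinset
  have hT : (T : Set (Fin d → ℝ)) = s ∩ Θ := Set.Finite.coe_toFinset _
  have hTne : T.Nonempty := by
    rw [← Finset.coe_nonempty, hT, ← convexHull_nonempty_iff (𝕜 := ℝ), ← hΘeq]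
    exact hΘ.nonempty (hs.isCompact_convexHull (𝕜 := ℝ)) (convexHull_nonempty_iff.2 hne)
  have hvΘ : T.centerMass (fun _ => (1 : ℝ)) id ∈ Θ := by
    rw [hΘeq, ← hT]
    exact T.centerMass_mem_convexHull (fun _ _ => zero_le_one) (by simpa using hTne)
      fun p hp => hp
  refine ⟨_, hvΘ, fun f m hle hm x hx => ?_⟩
  rw [hΘeq, ← hT] at hx
  exact eqOn_convexHull_of_centerMass_eq
    (fun p hp => hle p ((Set.Finite.mem_toFinset _).1 hp).2) hm x hx

theorem dimSet_add_dimSet_add_one_le {s t : Set (Fin d → ℝ)} {c : ℝ} (hc : c ≠ 0)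
    (hs : s.Nonempty) (ht : t.Nonempty) (hst : ∀ x ∈ s, ∀ z ∈ t, pairR z x = c) :
    dimSet t + dimSet s + 1 ≤ d := by
  obtain ⟨z, hz⟩ := ht
  have hlt : dimSet s < Module.finrank ℝ (Submodule.span ℝ s) :=
    finrank_vectorSpan_lt_finrank_span (f := dotProductBilin ℝ ℝ z) hc
      (fun x hx => hst x hx z hz) hs
  have horth : ∀ u ∈ Submodule.span ℝ s, ∀ w ∈ vectorSpan ℝ t, w ⬝ᵥ u = 0 := by
    intro u hu w hw
    have hws : s ⊆ LinearMap.ker (dotProductBilin ℝ ℝ w) := fun x hx =>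
      vectorSpan_le_ker_of_forall_eq (f := (dotProductBilin ℝ ℝ).flip x) (hst x hx) hw
    exact Submodule.span_le.2 hws hu
  have hcard := finrank_add_finrank_le_of_dotProduct_eq_zero horth
  rw [Fintype.card_fin] at hcard
  unfold dimSet at hlt ⊢
  omega

theorem neg_one_le_pairR_of_mem_latticeHull_polarSet {Δ : Set (Fin d → ℝ)} {v z : Fin d → ℝ}
    (hv : v ∈ Δ) (hz : z ∈ latticeHull (polarSet Δ)) : -1 ≤ pairR z v :=
  convexHull_min (fun p hp => (hp.1 v hv).trans_eq (pairR_comm v p))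
    (convex_halfSpace_ge (pairRₗ v).isLinear (-1)) hz

theorem pairR_eq_neg_one_of_mem_latticeHull_dualFace {Δ Θ : Set (Fin d → ℝ)} {x z : Fin d → ℝ}
    (hx : x ∈ Θ) (hz : z ∈ latticeHull (dualFace Δ Θ)) : pairR z x = -1 :=
  convexHull_min (fun p hp => (pairR_comm p x).trans (hp.1.2 x hx))
    (convex_hyperplane (pairRₗ x).isLinear (-1)) hz

theorem ordP_latticeHull_polarSet_eq_neg_one {Δ : Set (Fin d → ℝ)} {v y : Fin d → ℝ}
    (hv : v ∈ Δ) (hy : y ∈ polarSet Δ) (hyL : IsLatticePoint y) (hyv : pairR y v = -1) :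
    ordP (latticeHull (polarSet Δ)) v = -1 :=
  hyv ▸ ordP_eq_of_forall_le (subset_convexHull ℝ _ ⟨hy, hyL⟩) fun _ hz =>
    hyv ▸ neg_one_le_pairR_of_mem_latticeHull_polarSet hv hz

theorem latticeHull_dualFace_eq {Δ Θ : Set (Fin d → ℝ)} {v : Fin d → ℝ} (hΘΔ : Θ ⊆ Δ)
    (hv : v ∈ Θ) (hrel : ∀ (f : (Fin d → ℝ) →ₗ[ℝ] ℝ) (m : ℝ),
      (∀ x ∈ Θ, m ≤ f x) → f v = m → ∀ x ∈ Θ, f x = m) :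
    latticeHull (dualFace Δ Θ) = {z ∈ latticeHull (polarSet Δ) | pairR z v = -1} := by
  have hpts : {y ∈ dualFace Δ Θ | IsLatticePoint y} =
      {p ∈ {y ∈ polarSet Δ | IsLatticePoint y} | pairRₗ v p = -1} := by
    ext p
    constructor
    · rintro ⟨⟨hpΔ, hpΘ⟩, hp⟩
      exact ⟨⟨hpΔ, hp⟩, (pairR_comm p v).trans (hpΘ v hv)⟩
    · rintro ⟨⟨hpΔ, hp⟩, hpv⟩
      exact ⟨⟨hpΔ, hrel (pairRₗ p) (-1) (fun x hx => hpΔ x (hΘΔ hx))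
        ((pairR_comm v p).trans hpv)⟩, hp⟩
  rw [latticeHull, hpts, convexHull_sep_eq_of_le fun p hp =>
    (hp.1 v (hΘΔ hv)).trans_eq (pairR_comm v p)]
  rfl

theorem stmt9_general {d k : ℕ} (Δ Θ : Set (Fin d → ℝ)) (h1 : IsLatticePolytope Δ)
    (h2 : (interior Δ).Nonempty)
    (hΘ : IsFaceOf Δ Θ) (hk : dimSet Θ = k)
    (hne : {x ∈ dualFace Δ Θ | IsLatticePoint x}.Nonempty) :
    IsFaceOf (latticeHull (polarSet Δ)) (latticeHull (dualFace Δ Θ)) ∧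
      dimSet (latticeHull (dualFace Δ Θ)) + k + 1 ≤ d := by
  obtain ⟨S, rfl⟩ := h1
  have hvert : (toR '' (S : Set (Fin d → ℤ))).Nonempty :=
    convexHull_nonempty_iff.1 (h2.mono interior_subset)
  obtain ⟨v, hvΘ, hrel⟩ := hΘ.exists_mem_forall_eq (S.finite_toSet.image _) hvert
  obtain ⟨y, ⟨hyΔ, hyΘ⟩, hyL⟩ := hne
  have hyv : pairR y v = -1 := (pairR_comm y v).trans (hyΘ v hvΘ)
  refine ⟨⟨v, ?_⟩, hk ▸ ?_⟩
  · rw [ordP_latticeHull_polarSet_eq_neg_one (hΘ.subset hvΘ) hyΔ hyL hyv]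
    exact latticeHull_dualFace_eq hΘ.subset hvΘ hrel
  · exact dimSet_add_dimSet_add_one_le (neg_ne_zero.2 one_ne_zero) ⟨v, hvΘ⟩
      ⟨y, subset_convexHull ℝ _ ⟨⟨hyΔ, hyΘ⟩, hyL⟩⟩
      fun x hx _ hz => pairR_eq_neg_one_of_mem_latticeHull_dualFace hx hz

/-- if Δ^{FI} = {0} and Θ is a k-dimensional face of Δ with [Θ*]
nonempty, then [Θ*] is a face of [Δ*] of dimension at most d-1-k. -/
theorem stmt9 {d k : ℕ} (Δ Θ : Set (Fin d → ℝ)) (h1 : IsLatticePolytope Δ)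
    (h2 : (interior Δ).Nonempty) (hFI : fineInterior Δ = {0})
    (hΘ : IsFaceOf Δ Θ) (hk : dimSet Θ = k)
    (hne : {x ∈ dualFace Δ Θ | IsLatticePoint x}.Nonempty) :
    IsFaceOf (latticeHull (polarSet Δ)) (latticeHull (dualFace Δ Θ)) ∧
      dimSet (latticeHull (dualFace Δ Θ)) + k + 1 ≤ d :=
  stmt9_general Δ Θ h1 h2 hΘ hk hne
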